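/- In the BCK-algebra X'_n (n ≥ 5), for all elements a, b with b ≤ a in the BCK-order, the sequence defined by z_0 = a, z_1 = b, and z_k = z_{k-2}·(z_{k-2}·z_{k-1}) for k ≥ 2 satisfies z_{n-2} = z_{n-1} (and hence z_k = z_{n-2} for all k ≥ n−2). -/

import Mathlib

/-- The operation of the linearly ordered BCK-algebra `X_n` written on natural
numbers: `x*y = 0` if `x ≤ y`, `x*0 = x`, `x*y = 1` if `x = y+1`, and
`x*y = x−y−1` if `x > y+1` and `y ≥ 1`. -/
def natStar (x y : ℕ) : ℕ :=
  if x ≤ y then 0 else if y = 0 then x else if x = y + 1 then 1 else x - y - 1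

/-- The operation of `X'_n = {0, 1, …, n}` written on natural numbers:
`x·y = x*y` for `x, y ≤ n−1`; `n·0 = n`; `n·y = n−y−1` for `1 ≤ y ≤ n−2`;
`n·(n−1) = 1`; `x·n = 0` for every `x ≠ n−1` (in particular `n·n = 0`);
and `(n−1)·n = 1`. -/
def primeVal (n x y : ℕ) : ℕ :=
  if y = n then (if x = n - 1 then 1 else 0)
  else if x = n then (if y = 0 then n else if y = n - 1 then 1 else n - y - 1)
  else natStar x y

theorem natStar_le (x y : ℕ) : natStar x y ≤ x := by
  unfold natStar; split_ifs <;> omega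

theorem primeVal_lt {n x y : ℕ} (hn : 1 ≤ n) (hx : x < n + 1) (hy : y < n + 1) :
    primeVal n x y < n + 1 := by
  have h := natStar_le x y
  unfold primeVal; split_ifs <;> omega

/-- The BCK-algebra operation of `X'_n = {0, 1, …, n}` (for `n ≥ 5`),
as an operation on `Fin (n+1)`. -/
def primeOp {n : ℕ} (hn : 5 ≤ n) (x y : Fin (n + 1)) : Fin (n + 1) :=
  ⟨primeVal n x y, primeVal_lt (by omega) x.isLt y.isLt⟩

/-- The sequence `z_0 = a`, `z_1 = b`, `z_k = z_{k-2}·(z_{k-2}·z_{k-1})`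
for `k ≥ 2`. -/
def zseq {X : Type*} (op : X → X → X) (a b : X) : ℕ → X
  | 0 => a
  | 1 => b
  | k + 2 => op (zseq op a b k) (op (zseq op a b k) (zseq op a b (k + 1)))

/-!
Since `x·(x·x) = x·0 = x`, the sequence is constant from `z_1 = b` on as soon as `a·(a·b) = b`,
and in `X'_n` this holds for every `b ≤ a` except when `a = b + 1` with `2 ≤ b` and `a < n`.
In that case `a·(a·b) = a·1 = b - 1`, so the sequence counts down `a, b, b - 1, …, 2, 1`
and is constant `1` from index `b ≤ n - 2` on.
-/

section zseq

variable {X : Type*} (op : X → X → X)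

theorem zseq_succ (a b : X) :
    ∀ k, zseq op a b (k + 1) = zseq op b (op a (op a b)) k
  | 0 => rfl
  | 1 => rfl
  | k + 2 => by
    change op (zseq op a b (k + 1)) (op (zseq op a b (k + 1)) (zseq op a b (k + 2))) = _
    rw [zseq_succ a b k, zseq_succ a b (k + 1), zseq]

theorem zseq_self {c : X} (hc : op c (op c c) = c) (k : ℕ) : zseq op c c k = c := by
  induction k with
  | zero => rfl
  | succ k ih => rw [zseq_succ, hc, ih]

theorem zseq_succ_eq_of_op_op_eq {a b : X} (hab : op a (op a b) = b) (hb : op b (op b b) = b)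
    (k : ℕ) : zseq op a b (k + 1) = b := by
  rw [zseq_succ, hab, zseq_self op hb]

theorem zseq_map {Y : Type*} (op' : Y → Y → Y) (f : X → Y)
    (hf : ∀ x y, f (op x y) = op' (f x) (f y)) (a b : X) :
    ∀ k, f (zseq op a b k) = zseq op' (f a) (f b) k
  | 0 => rfl
  | 1 => rfl
  | k + 2 => by
    rw [zseq, hf, hf, zseq_map op' f hf a b k, zseq_map op' f hf a b (k + 1), zseq]

end zseq

section primeVal

variable {n : ℕ}

theorem primeVal_self (hn : n ≠ 0) (x : ℕ) : primeVal n x x = 0 := by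
  unfold primeVal natStar; split_ifs <;> first | contradiction | omega

theorem primeVal_zero (hn : n ≠ 0) (x : ℕ) : primeVal n x 0 = x := by
  unfold primeVal natStar; split_ifs <;> first | contradiction | omega

theorem primeVal_primeVal_self (hn : n ≠ 0) (x : ℕ) : primeVal n x (primeVal n x x) = x := by
  rw [primeVal_self hn, primeVal_zero hn]

theorem primeVal_primeVal_eq_of_primeVal_eq_zero {x y : ℕ} (hx : x ≤ n) (hy : y ≤ n)
    (hyx : primeVal n y x = 0) (hne : ¬(x = y + 1 ∧ 2 ≤ y ∧ x < n)) :
    primeVal n x (primeVal n x y) = y := by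
  generalize hc : primeVal n x y = c
  unfold primeVal natStar at hyx hc ⊢
  split_ifs at hyx hc ⊢ <;> first | contradiction | omega

theorem primeVal_primeVal_add_two_add_one {c : ℕ} (hc : 1 ≤ c) (hcn : c + 2 ≤ n) :
    primeVal n (c + 2) (primeVal n (c + 2) (c + 1)) = c := by
  have h1 : primeVal n (c + 2) (c + 1) = 1 := by
    unfold primeVal natStar; split_ifs <;> first | contradiction | omega
  rw [h1]; unfold primeVal natStar; split_ifs <;> first | contradiction | omega

theorem zseq_primeVal_succ_eq {a b : ℕ} (hn : n ≠ 0) (ha : a ≤ n) (hb : b ≤ n)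
    (hba : primeVal n b a = 0) (hne : ¬(a = b + 1 ∧ 2 ≤ b ∧ a < n)) :
    ∀ k, zseq (primeVal n) a b (k + 1) = b :=
  zseq_succ_eq_of_op_op_eq _ (primeVal_primeVal_eq_of_primeVal_eq_zero ha hb hba hne)
    (primeVal_primeVal_self hn b)

theorem zseq_primeVal_add_one_self_eq_one {c : ℕ} (hc : 1 ≤ c) (hcn : c + 1 < n) :
    ∀ k, c ≤ k → zseq (primeVal n) (c + 1) c k = 1 := by
  induction c, hc using Nat.le_induction with
  | base =>
    rintro (_ | k) hk
    · omega
    · refine zseq_primeVal_succ_eq (by omega) (by omega) (by omega) ?_ (by omega) k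
      unfold primeVal natStar; split_ifs <;> first | contradiction | omega
  | succ c hc ih =>
    rintro (_ | k) hk
    · omega
    · rw [zseq_succ, primeVal_primeVal_add_two_add_one hc (by omega)]
      exact ih (by omega) k (by omega)

theorem exists_zseq_primeVal_eq {a b : ℕ} (hn : 3 ≤ n) (ha : a ≤ n) (hb : b ≤ n)
    (hba : primeVal n b a = 0) :
    ∃ m ≤ n - 2, ∀ k, m ≤ k → zseq (primeVal n) a b k = zseq (primeVal n) a b m := by
  by_cases hne : a = b + 1 ∧ 2 ≤ b ∧ a < n
  · obtain ⟨rfl, hb2, hbn⟩ := hne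
    have hrun := zseq_primeVal_add_one_self_eq_one (by omega) hbn
    exact ⟨b, by omega, fun k hk => (hrun k hk).trans (hrun b le_rfl).symm⟩
  · have hgen := zseq_primeVal_succ_eq (by omega) ha hb hba hne
    refine ⟨1, by omega, ?_⟩
    rintro (_ | k) hk
    · omega
    · exact (hgen k).trans (hgen 0).symm

end primeVal

/-- In the BCK-algebra `X'_n` (`n ≥ 5`), for all elements `a, b` with `b ≤ a`
in the BCK-order, the sequence `z_0 = a`, `z_1 = b`,
`z_k = z_{k-2}·(z_{k-2}·z_{k-1})` satisfies `z_{n-2} = z_{n-1}`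
(and hence `z_k = z_{n-2}` for all `k ≥ n−2`). -/
theorem primeOp_seq_stabilizes (n : ℕ) (hn : 5 ≤ n) (a b : Fin (n + 1))
    (h : primeOp hn b a = 0) :
    zseq (primeOp hn) a b (n - 2) = zseq (primeOp hn) a b (n - 1) ∧
    ∀ k : ℕ, n - 2 ≤ k → zseq (primeOp hn) a b k = zseq (primeOp hn) a b (n - 2) := by
  have hba : primeVal n b a = 0 := Fin.ext_iff.mp h
  obtain ⟨m, hm, hconst⟩ := exists_zseq_primeVal_eq (by omega) a.is_le b.is_le hba
  have hval : ∀ k, (zseq (primeOp hn) a b k).val = zseq (primeVal n) a b k :=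
    zseq_map _ _ Fin.val (fun _ _ => rfl) a b
  have hstab : ∀ k, n - 2 ≤ k → zseq (primeOp hn) a b k = zseq (primeOp hn) a b (n - 2) :=
    fun k hk => Fin.ext (by rw [hval, hval, hconst k (by omega), hconst (n - 2) hm])
  exact ⟨(hstab (n - 1) (by omega)).symm, hstab⟩
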